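/- For the relaxation Runge–Kutta update u_γ^{n+1} = uⁿ + γΔt Σ_j b_j f_j, if Σ_j b_j ⟨y_j, f_j⟩ = 0 and ‖Σ_j b_j f_j‖² ≠ 0, then choosing γ = 2(Σ_{i,j} b_i a_{ij}⟨f_i, f_j⟩)/(Σ_{i,j} b_i b_j⟨f_i, f_j⟩) yields exact energy conservation: ‖u_γ^{n+1}‖² = ‖uⁿ‖². -/

import Mathlib

open RealInnerProductSpace Finset

/-!
Writing `F = ∑ⱼ bⱼ fⱼ`, the update is `u + γΔt F`, so
`‖u + γΔt F‖² - ‖u‖² = γΔt (2⟪u, F⟫ + γΔt ‖F‖²)`. Expanding the stages, the hypothesis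
`∑ⱼ bⱼ⟪yⱼ, fⱼ⟫ = 0` says `⟪u, F⟫ = -Δt ∑ bᵢaᵢⱼ⟪fᵢ, fⱼ⟫`, and the denominator of `γ` is `‖F‖²`,
so the difference is `γΔt² (γ‖F‖² - 2 ∑ bᵢaᵢⱼ⟪fᵢ, fⱼ⟫)`, which vanishes by the choice of `γ`.
-/

section RelaxationRungeKutta

variable {V ι : Type*} [NormedAddCommGroup V] [InnerProductSpace ℝ V] [Fintype ι]

lemma norm_sum_smul_sq (b : ι → ℝ) (f : ι → V) :
    ‖∑ j, b j • f j‖ ^ 2 = ∑ i, ∑ j, b i * b j * ⟪f i, f j⟫ := by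
  simp only [← real_inner_self_eq_norm_sq, sum_inner, inner_sum, real_inner_smul_left,
    real_inner_smul_right, mul_assoc]
  exact sum_congr rfl fun i _ => sum_congr rfl fun j _ => by rw [real_inner_comm]

lemma sum_mul_inner_add_smul_sum (u : V) (Δt : ℝ) (a : ι → ι → ℝ) (b : ι → ℝ) (f : ι → V) :
    ∑ j, b j * ⟪u + Δt • ∑ k, a j k • f k, f j⟫
      = ⟪u, ∑ j, b j • f j⟫ + Δt * ∑ i, ∑ j, b i * a i j * ⟪f i, f j⟫ := by
  simp only [inner_add_left, real_inner_smul_left, sum_inner, inner_sum,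
    real_inner_smul_right, mul_add, sum_add_distrib, mul_sum]
  congr 1
  refine sum_congr rfl fun i _ => sum_congr rfl fun j _ => ?_
  rw [real_inner_comm]
  ring

/-- With the junk value `x / 0 = 0` this holds also for `y = 0`. -/
lemma div_mul_div_mul_sub_eq_zero (x y : ℝ) : x / y * (x / y * y - x) = 0 := by
  rcases eq_or_ne y 0 with rfl | hy
  · simp
  · rw [div_mul_cancel₀ x hy, sub_self, mul_zero]

end RelaxationRungeKutta

theorem stmt9_general {V : Type*} [NormedAddCommGroup V] [InnerProductSpace ℝ V]
    {s : ℕ}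
    (un : V) (Δt : ℝ) (a : Fin s → Fin s → ℝ) (b : Fin s → ℝ) (f : Fin s → V)
    (y : Fin s → V) (hy : ∀ i, y i = un + Δt • ∑ j, a i j • f j)
    (hcons : ∑ j, b j * ⟪y j, f j⟫ = 0)
    (γ : ℝ)
    (hγ : γ = 2 * (∑ i, ∑ j, b i * a i j * ⟪f i, f j⟫)
              / (∑ i, ∑ j, b i * b j * ⟪f i, f j⟫))
    (uγ : V) (huγ : uγ = un + (γ * Δt) • ∑ j, b j • f j) :
    ‖uγ‖ ^ 2 = ‖un‖ ^ 2 := by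
  set A := ∑ i, ∑ j, b i * a i j * ⟪f i, f j⟫
  have hinner : ⟪un, ∑ j, b j • f j⟫ = -(Δt * A) := by
    simp only [hy, sum_mul_inner_add_smul_sum] at hcons
    linarith
  have hγA : γ * (γ * ‖∑ j, b j • f j‖ ^ 2 - 2 * A) = 0 := by
    rw [norm_sum_smul_sq, hγ]
    exact div_mul_div_mul_sub_eq_zero _ _
  rw [huγ, norm_add_sq_real, real_inner_smul_right, norm_smul, mul_pow, Real.norm_eq_abs,
    sq_abs, hinner]
  linear_combination Δt ^ 2 * hγA

/-- The relaxation Runge–Kutta step with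
`γ = 2(Σ bᵢaᵢⱼ⟪fᵢ,fⱼ⟫)/(Σ bᵢbⱼ⟪fᵢ,fⱼ⟫)` conserves the energy exactly when
`Σ bⱼ⟪yⱼ,fⱼ⟫ = 0` and `‖Σ bⱼ fⱼ‖ ≠ 0`. -/
theorem stmt9 {V : Type*} [NormedAddCommGroup V] [InnerProductSpace ℝ V]
    {s : ℕ} (hs : 1 ≤ s)
    (un : V) (Δt : ℝ) (a : Fin s → Fin s → ℝ) (b : Fin s → ℝ) (f : Fin s → V)
    (y : Fin s → V) (hy : ∀ i, y i = un + Δt • ∑ j, a i j • f j)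
    (hcons : ∑ j, b j * ⟪y j, f j⟫ = 0)
    (hne : ‖∑ j, b j • f j‖ ≠ 0)
    (γ : ℝ)
    (hγ : γ = 2 * (∑ i, ∑ j, b i * a i j * ⟪f i, f j⟫)
              / (∑ i, ∑ j, b i * b j * ⟪f i, f j⟫))
    (uγ : V) (huγ : uγ = un + (γ * Δt) • ∑ j, b j • f j) :
    ‖uγ‖ ^ 2 = ‖un‖ ^ 2 :=
  stmt9_general un Δt a b f y hy hcons γ hγ uγ huγ
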